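/- arXiv:2511.12146 — 2 statements merged into one kernel-verified Lean document; each statement's English description precedes it below -/
import Mathlib

section
/- Let m, p ∈ ℕ and let B_i > 0, β_i > 0 (for i = 1,…,m) and A_j > 0, α_j > 0 (for j = 1,…,p) be real parameters satisfying ∑_{i=1}^m β_i − ∑_{j=1}^p α_j < 1. Then for every x ∈ ℝ, the function x ↦ ∑_{k=0}^∞ (∏_{i=1}^m Γ(B_i + β_i k) / ∏_{j=1}^p Γ(A_j + α_j k)) x^k / k! is differentiable at x with derivative ∑_{k=0}^∞ (∏_{i=1}^m Γ(B_i + β_i + β_i k) / ∏_{j=1}^p Γ(A_j + α_j + α_j k)) x^k / k!; that is, the derivative of the generalized Wright function with parameters (B_i, β_i), (A_j, α_j) is the generalized Wright function with shifted parameters (B_i + β_i, β_i), (A_j + α_j, α_j). -/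
/-!
Write the Wright function as the exponential generating series `∑ c k * y ^ k / k !` with
`c t = ∏ Γ(Bᵢ + βᵢ t) / ∏ Γ(Aⱼ + αⱼ t)`. Termwise, its derivative is `∑ c (k + 1) * y ^ k / k !`,
and `c (k + 1)` is the coefficient with shifted parameters. Termwise differentiation is justified
once the series is entire. Log-convexity of `Γ` gives Wendel's estimate `Γ(z + b) / Γ(z) ≍ z ^ b`,
so `c (k + 1) / c k ≍ k ^ (∑ βᵢ - ∑ αⱼ)`, which is `o(k)` exactly when `∑ βᵢ - ∑ αⱼ < 1`, and the
ratio test then applies for every `y`.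
-/

open Real Set Filter Asymptotics Finset
open scoped Nat

-- The slope of `log ∘ Γ` on `[z, z + a]` is at most its slope `log (z + a)` on `[z + a, z + a + 1]`.
theorem Real.Gamma_add_le_Gamma_mul_add_rpow {z a : ℝ} (hz : 0 < z) (ha : 0 < a) :
    Gamma (z + a) ≤ Gamma z * (z + a) ^ a := by
  have hza : 0 < z + a := by linarith
  have hslope := convexOn_log_Gamma.slope_mono_adjacent (x := z) (y := z + a) (z := z + a + 1)
    hz (by simp only [Set.mem_Ioi]; linarith) (by linarith) (by linarith)
  simp only [Function.comp_apply, Gamma_add_one hza.ne', add_sub_cancel_left, div_one] at hslope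
  rw [log_mul hza.ne' (Gamma_pos_of_pos hza).ne', add_sub_cancel_right, div_le_iff₀ ha] at hslope
  rw [← log_le_log_iff (Gamma_pos_of_pos hza) (by have := Gamma_pos_of_pos hz; positivity),
    log_mul (Gamma_pos_of_pos hz).ne' (by positivity), log_rpow hza]
  linarith

-- The slope `log (z - 1)` of `log ∘ Γ` on `[z - 1, z]` is at most its slope on `[z, z + a]`.
theorem Real.Gamma_mul_sub_one_rpow_le_Gamma_add {z a : ℝ} (hz : 1 < z) (ha : 0 < a) :
    Gamma z * (z - 1) ^ a ≤ Gamma (z + a) := by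
  have hz1 : 0 < z - 1 := by linarith
  have hslope := convexOn_log_Gamma.slope_mono_adjacent (x := z - 1) (y := z) (z := z + a)
    hz1 (by simp only [Set.mem_Ioi]; linarith) (by linarith) (by linarith)
  have hΓ : Gamma z = (z - 1) * Gamma (z - 1) := by
    rw [← Gamma_add_one hz1.ne', sub_add_cancel]
  simp only [Function.comp_apply, sub_sub_cancel, div_one, add_sub_cancel_left] at hslope
  rw [hΓ, log_mul hz1.ne' (Gamma_pos_of_pos hz1).ne', add_sub_cancel_right,
    le_div_iff₀ ha] at hslope
  rw [← log_le_log_iff (by have := Gamma_pos_of_pos (zero_lt_one.trans hz); positivity)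
    (Gamma_pos_of_pos (by linarith)), log_mul (Gamma_pos_of_pos (by linarith)).ne' (by positivity),
    log_rpow hz1, hΓ, log_mul hz1.ne' (Gamma_pos_of_pos hz1).ne']
  linarith

theorem Real.isTheta_Gamma_add_div_Gamma {b : ℝ} (hb : 0 < b) :
    (fun z => Gamma (z + b) / Gamma z) =Θ[atTop] fun z => z ^ b := by
  constructor
  · refine IsBigO.of_bound (2 ^ b) ?_
    filter_upwards [eventually_ge_atTop b] with z hz
    have hz0 : 0 < z := hb.trans_le hz
    have hΓ := Gamma_pos_of_pos hz0
    rw [norm_of_nonneg (div_nonneg (Gamma_pos_of_pos (by linarith)).le hΓ.le),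
      norm_of_nonneg (by positivity), div_le_iff₀ hΓ, ← mul_rpow (by norm_num) hz0.le]
    calc Gamma (z + b) ≤ Gamma z * (z + b) ^ b := Gamma_add_le_Gamma_mul_add_rpow hz0 hb
      _ ≤ (2 * z) ^ b * Gamma z := by rw [mul_comm]; gcongr; linarith
  · refine IsBigO.of_bound (2 ^ b) ?_
    filter_upwards [eventually_ge_atTop 2] with z hz
    have hΓ := Gamma_pos_of_pos (by linarith : 0 < z)
    rw [norm_of_nonneg (div_nonneg (Gamma_pos_of_pos (by linarith)).le hΓ.le),
      norm_of_nonneg (by positivity), mul_div_assoc', le_div_iff₀ hΓ]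
    calc z ^ b * Gamma z ≤ (2 * (z - 1)) ^ b * Gamma z := by gcongr; linarith
      _ = 2 ^ b * (Gamma z * (z - 1) ^ b) := by rw [mul_rpow (by norm_num) (by linarith)]; ring
      _ ≤ 2 ^ b * Gamma (z + b) := by
        gcongr; exact Gamma_mul_sub_one_rpow_le_Gamma_add (by linarith) hb

theorem tendsto_const_add_mul_atTop (a : ℝ) {b : ℝ} (hb : 0 < b) :
    Tendsto (fun t => a + b * t) atTop atTop :=
  tendsto_atTop_add_const_left _ _ (tendsto_id.const_mul_atTop hb)

theorem Real.isTheta_Gamma_const_add_mul_succ_div {a b : ℝ} (hb : 0 < b) :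
    (fun t => Gamma (a + b * (t + 1)) / Gamma (a + b * t)) =Θ[atTop] fun t => t ^ b := by
  have hlin := tendsto_const_add_mul_atTop a hb
  have hΓ := isTheta_Gamma_add_div_Gamma hb
  have hθ : (fun t : ℝ => a + b * t) =Θ[atTop] fun t => t :=
    (isLittleO_const_id_atTop a).add_isTheta ((isTheta_const_mul_left hb.ne').2 (isTheta_refl _ _))
  have hshift : (fun t => Gamma (a + b * (t + 1)) / Gamma (a + b * t)) =
      (fun z => Gamma (z + b) / Gamma z) ∘ fun t => a + b * t := by
    ext t; simp only [Function.comp_apply]; ring_nf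
  rw [hshift]
  exact IsTheta.trans ⟨hΓ.1.comp_tendsto hlin, hΓ.2.comp_tendsto hlin⟩
    (hθ.rpow (hlin.eventually_ge_atTop 0) (eventually_ge_atTop 0))

theorem isLittleO_rpow_atTop_of_lt_one {s : ℝ} (hs : s < 1) :
    (fun t : ℝ => t ^ s) =o[atTop] fun t => t := by
  have hdecay : (fun t : ℝ => t ^ (s - 1)) =o[atTop] fun _ => (1 : ℝ) :=
    (isLittleO_one_iff ℝ).2 (by simpa using tendsto_rpow_neg_atTop (by linarith : 0 < 1 - s))
  refine (hdecay.mul_isBigO (isBigO_refl (fun t : ℝ => t) _)).congr' ?_ (by simp)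
  filter_upwards [eventually_gt_atTop 0] with t ht
  rw [← rpow_add_one ht.ne', sub_add_cancel]

theorem summable_norm_mul_pow_div_factorial_of_isLittleO {E : Type*} [SeminormedAddCommGroup E]
    {c : ℕ → E} (hc : (fun k => c (k + 1)) =o[atTop] fun k => (k : ℝ) * ‖c k‖) (R : ℝ) :
    Summable fun k => ‖c k‖ * R ^ k / k ! := by
  have hε : 0 < 1 / (2 * (|R| + 1)) := by positivity
  have hεR : 1 / (2 * (|R| + 1)) * |R| ≤ 1 / 2 := by
    rw [div_mul_eq_mul_div, one_mul, div_le_div_iff₀ (by positivity) (by norm_num)]; linarith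
  refine summable_of_ratio_norm_eventually_le (r := 1 / 2) (by norm_num) ?_
  filter_upwards [hc.bound hε] with k hk
  rw [norm_mul, norm_norm, Real.norm_natCast] at hk
  simp only [norm_div, norm_mul, norm_norm, norm_pow, Real.norm_natCast, Nat.factorial_succ,
    Nat.cast_mul, pow_succ]
  calc ‖c (k + 1)‖ * (|R| ^ k * |R|) / ((k + 1 : ℕ) * k !)
      ≤ 1 / (2 * (|R| + 1)) * ((k + 1) * ‖c k‖) * (|R| ^ k * |R|) / ((k + 1 : ℕ) * k !) := by
        gcongr
        exact hk.trans (by gcongr; linarith)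
    _ = 1 / (2 * (|R| + 1)) * |R| * (‖c k‖ * |R| ^ k / k !) := by
        push_cast; field_simp
    _ ≤ 1 / 2 * (‖c k‖ * |R| ^ k / k !) := by gcongr

theorem hasDerivAt_tsum_mul_pow_div_factorial {c : ℕ → ℝ}
    (hc : ∀ R, Summable fun k => ‖c k‖ * R ^ k / k !) (x : ℝ) :
    HasDerivAt (fun y => ∑' k, c k * y ^ k / k !) (∑' k, c (k + 1) * x ^ k / k !) x := by
  set R := |x| + 1
  have hR : 1 ≤ R := by simp [R]
  have hx : x ∈ Metric.ball 0 R := by simp [R]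
  -- `k * |y| ^ (k - 1) ≤ (2 * R) ^ k` on the ball, since `k ≤ 2 ^ k` and `R ≥ 1`.
  have hbound : ∀ k (y : ℝ), y ∈ Metric.ball 0 R →
      ‖c k * (k * y ^ (k - 1)) / (k ! : ℝ)‖ ≤ ‖c k‖ * (2 * R) ^ k / k ! := by
    intro k y hy
    rw [mem_ball_zero_iff, norm_eq_abs] at hy
    have hk : (k : ℝ) ≤ 2 ^ k := by exact_mod_cast Nat.lt_two_pow_self.le
    have hy' : |y| ^ (k - 1) ≤ R ^ k :=
      (pow_le_pow_left₀ (abs_nonneg y) hy.le _).trans (pow_le_pow_right₀ hR (Nat.sub_le k 1))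
    simp only [norm_div, norm_mul, norm_pow, norm_eq_abs, Nat.abs_cast, mul_pow]
    gcongr
  have hsummable : Summable fun k => c k * (k * x ^ (k - 1)) / k ! :=
    (hc (2 * R)).of_norm_bounded fun k => hbound k x hx
  have hderiv := hasDerivAt_tsum_of_isPreconnected (hc (2 * R)) Metric.isOpen_ball
    (convex_ball 0 R).isPreconnected
    (fun k y _ => ((hasDerivAt_pow k y).const_mul (c k)).div_const _)
    hbound hx ((hc |x|).of_norm_bounded fun k => by simp [norm_div]) hx
  refine hderiv.congr_deriv ?_
  rw [hsummable.tsum_eq_zero_add]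
  simp only [CharP.cast_eq_zero, zero_mul, mul_zero, zero_div, zero_add]
  refine tsum_congr fun k => ?_
  rw [Nat.factorial_succ, Nat.add_sub_cancel]
  push_cast
  field_simp

section Wright

variable {ι κ : Type*} [Fintype ι] [Fintype κ] (B β : ι → ℝ) (A α : κ → ℝ)

noncomputable def wrightCoeff (t : ℝ) : ℝ :=
  (∏ i, Gamma (B i + β i * t)) / ∏ j, Gamma (A j + α j * t)

variable {B β A α}

theorem isTheta_wrightCoeff_succ_div (hβ : ∀ i, 0 < β i) (hα : ∀ j, 0 < α j) :
    (fun t => wrightCoeff B β A α (t + 1) / wrightCoeff B β A α t) =Θ[atTop]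
      fun t => t ^ (∑ i, β i - ∑ j, α j) := by
  have hsplit : (fun t => wrightCoeff B β A α (t + 1) / wrightCoeff B β A α t) = fun t =>
      (∏ i, Gamma (B i + β i * (t + 1)) / Gamma (B i + β i * t)) /
        ∏ j, Gamma (A j + α j * (t + 1)) / Gamma (A j + α j * t) := by
    ext t
    simp only [wrightCoeff, prod_div_distrib, div_div_div_comm]
  rw [hsplit]
  refine ((IsTheta.finsetProd fun i _ => isTheta_Gamma_const_add_mul_succ_div (hβ i)).div
    (IsTheta.finsetProd fun j _ => isTheta_Gamma_const_add_mul_succ_div (hα j))).trans_eventuallyEq ?_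
  filter_upwards [eventually_gt_atTop 0] with t ht
  rw [rpow_sub ht, rpow_sum_of_pos ht, rpow_sum_of_pos ht]

theorem eventually_wrightCoeff_pos (hβ : ∀ i, 0 < β i) (hα : ∀ j, 0 < α j) :
    ∀ᶠ t in atTop, 0 < wrightCoeff B β A α t := by
  filter_upwards
    [eventually_all.2 fun i => (tendsto_const_add_mul_atTop (B i) (hβ i)).eventually_gt_atTop 0,
      eventually_all.2 fun j => (tendsto_const_add_mul_atTop (A j) (hα j)).eventually_gt_atTop 0]
    with t hBt hAt
  exact div_pos (prod_pos fun i _ => Gamma_pos_of_pos (hBt i))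
    (prod_pos fun j _ => Gamma_pos_of_pos (hAt j))

theorem isLittleO_wrightCoeff_succ (hβ : ∀ i, 0 < β i) (hα : ∀ j, 0 < α j)
    (hconv : ∑ i, β i - ∑ j, α j < 1) :
    (fun k : ℕ => wrightCoeff B β A α ↑(k + 1)) =o[atTop]
      fun k => (k : ℝ) * ‖wrightCoeff B β A α k‖ := by
  have hratio := (isTheta_wrightCoeff_succ_div (B := B) (A := A) hβ hα).isBigO.trans_isLittleO
    (isLittleO_rpow_atTop_of_lt_one hconv)
  have hreal : (fun t => wrightCoeff B β A α (t + 1)) =o[atTop]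
      fun t => t * ‖wrightCoeff B β A α t‖ := by
    refine (hratio.mul_isBigO (isBigO_norm_right.2 (isBigO_refl _ _))).congr' ?_ (by rfl)
    filter_upwards [eventually_wrightCoeff_pos hβ hα] with t ht
    exact div_mul_cancel₀ _ ht.ne'
  push_cast
  exact hreal.comp_tendsto tendsto_natCast_atTop_atTop

end Wright

theorem generalized_wright_hasDerivAt_general
    (m p : ℕ) (B β : Fin m → ℝ) (A α : Fin p → ℝ)
    (hβ : ∀ i, 0 < β i)
    (hα : ∀ j, 0 < α j)
    (hconv : (∑ i, β i) - (∑ j, α j) < 1) (x : ℝ) :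
    HasDerivAt
      (fun y : ℝ => ∑' k : ℕ,
        ((∏ i, Real.Gamma (B i + β i * k)) / (∏ j, Real.Gamma (A j + α j * k)))
          * y ^ k / (Nat.factorial k : ℝ))
      (∑' k : ℕ,
        ((∏ i, Real.Gamma (B i + β i + β i * k)) / (∏ j, Real.Gamma (A j + α j + α j * k)))
          * x ^ k / (Nat.factorial k : ℝ)) x := by
  have hshift : ∀ k : ℕ, wrightCoeff B β A α ↑(k + 1) =
      (∏ i, Real.Gamma (B i + β i + β i * k)) / ∏ j, Real.Gamma (A j + α j + α j * k) := by
    intro k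
    unfold wrightCoeff
    congr 1 <;> refine prod_congr rfl fun i _ => ?_ <;> push_cast <;> ring_nf
  have hderiv := hasDerivAt_tsum_mul_pow_div_factorial
    (summable_norm_mul_pow_div_factorial_of_isLittleO (c := fun k : ℕ => wrightCoeff B β A α k)
      (isLittleO_wrightCoeff_succ hβ hα hconv)) x
  simp only [hshift] at hderiv
  exact hderiv

/-- The derivative of the generalized Wright function with parameters
`(Bᵢ, βᵢ), (Aⱼ, αⱼ)` is the generalized Wright function with shifted parameters
`(Bᵢ + βᵢ, βᵢ), (Aⱼ + αⱼ, αⱼ)`. -/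
theorem generalized_wright_hasDerivAt
    (m p : ℕ) (B β : Fin m → ℝ) (A α : Fin p → ℝ)
    (hB : ∀ i, 0 < B i) (hβ : ∀ i, 0 < β i)
    (hA : ∀ j, 0 < A j) (hα : ∀ j, 0 < α j)
    (hconv : (∑ i, β i) - (∑ j, α j) < 1) (x : ℝ) :
    HasDerivAt
      (fun y : ℝ => ∑' k : ℕ,
        ((∏ i, Real.Gamma (B i + β i * k)) / (∏ j, Real.Gamma (A j + α j * k)))
          * y ^ k / (Nat.factorial k : ℝ))
      (∑' k : ℕ,
        ((∏ i, Real.Gamma (B i + β i + β i * k)) / (∏ j, Real.Gamma (A j + α j + α j * k)))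
          * x ^ k / (Nat.factorial k : ℝ)) x :=
  generalized_wright_hasDerivAt_general m p B β A α hβ hα hconv x
end

section
/- Let 𝐇 ∈ (0,1), let φ_t(x) = (t − x)_+^{𝐇−1/2} − (−x)_+^{𝐇−1/2} for t ≥ 0, and let c_𝐇 = 1/(2𝐇) + ∫_0^∞ ((1+s)^{𝐇−1/2} − s^{𝐇−1/2})² ds. Then for all t ≥ s ≥ 0, ∫_ℝ (φ_t(x) − φ_s(x))² dx = c_𝐇 · (t − s)^{2𝐇}; i.e., the L²-norm squared of the increment kernel depends only on t − s, which yields the stationarity of increments of the associated process. -/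
/-!
With `a = 𝐇 − 1/2`, the increment `φ_t − φ_s` is `x ↦ (t − x)_+^a − (s − x)_+^a`. Translating by
`s` and dilating by `t − s` turns it into `(t − s)^a φ_1`, because `y ↦ y_+^a` is homogeneous of
degree `a`; with the Jacobian `t − s` of the dilation this reduces everything to `∫ φ_1² = c_𝐇`.
For `x > 0`, `φ_1(x)` is `(1 − x)^a` on `(0, 1)` and `0` beyond, contributing `1/(2𝐇)`; for
`x < 0` it is `(1 + |x|)^a − |x|^a`, contributing the integral in `c_𝐇`. That integral is finite
since `−1 < 2a < 1`: the integrand is `O(|x|^{2a})` near `0` and, by the mean value theorem,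
`O(|x|^{2a−2})` at infinity.
-/

open MeasureTheory

/-- `y_+^a := y^a` if `y > 0` and `0` otherwise. -/
noncomputable def plusPow (y a : ℝ) : ℝ := if 0 < y then y ^ a else 0

/-- The fractional kernel `φ_t(x) = (t−x)_+^{𝐇−1/2} − (−x)_+^{𝐇−1/2}`. -/
noncomputable def fracKernel (H t x : ℝ) : ℝ :=
  plusPow (t - x) (H - 1 / 2) - plusPow (-x) (H - 1 / 2)

/-- The normalizing constant `c_𝐇 = 1/(2𝐇) + ∫₀^∞ ((1+s)^{𝐇−1/2} − s^{𝐇−1/2})² ds`. -/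
noncomputable def cH (H : ℝ) : ℝ :=
  1 / (2 * H) + ∫ s in Set.Ioi (0 : ℝ), ((1 + s) ^ (H - 1 / 2) - s ^ (H - 1 / 2)) ^ 2

open Set

lemma plusPow_of_pos {y : ℝ} (hy : 0 < y) (a : ℝ) : plusPow y a = y ^ a := if_pos hy

lemma plusPow_of_nonpos {y : ℝ} (hy : y ≤ 0) (a : ℝ) : plusPow y a = 0 := if_neg hy.not_gt

lemma plusPow_mul {δ : ℝ} (hδ : 0 < δ) (y a : ℝ) : plusPow (δ * y) a = δ ^ a * plusPow y a := by
  rcases lt_or_ge 0 y with hy | hy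
  · rw [plusPow_of_pos hy, plusPow_of_pos (mul_pos hδ hy), Real.mul_rpow hδ.le hy.le]
  · rw [plusPow_of_nonpos hy, plusPow_of_nonpos (mul_nonpos_of_nonneg_of_nonpos hδ.le hy),
      mul_zero]

lemma sq_rpow_eq_rpow_two_mul {x : ℝ} (hx : 0 ≤ x) (a : ℝ) : (x ^ a) ^ 2 = x ^ (2 * a) := by
  rw [← Real.rpow_mul_natCast hx, Nat.cast_ofNat, mul_comm]

lemma abs_one_add_rpow_sub_rpow_le {a x : ℝ} (ha : a ≤ 1) (hx : 0 < x) :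
    |(1 + x) ^ a - x ^ a| ≤ |a| * x ^ (a - 1) := by
  obtain ⟨c, ⟨hxc, -⟩, hslope⟩ := exists_hasDerivAt_eq_slope (fun y => y ^ a)
    (fun y => a * y ^ (a - 1)) (by linarith : x < 1 + x)
    (fun y hy =>
      (Real.continuousAt_rpow_const y a (Or.inl (by linarith [hy.1]))).continuousWithinAt)
    (fun y hy => Real.hasDerivAt_rpow_const (Or.inl (by linarith [hy.1])))
  rw [add_sub_cancel_right, div_one] at hslope
  rw [← hslope, abs_mul, abs_of_pos (Real.rpow_pos_of_pos (hx.trans hxc) _)]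
  exact mul_le_mul_of_nonneg_left (Real.rpow_le_rpow_of_nonpos hx hxc.le (by linarith))
    (abs_nonneg a)

lemma integrableOn_Ioi_sq_one_add_rpow_sub_rpow {a : ℝ} (ha₀ : -(1 / 2) < a) (ha₁ : a < 1 / 2) :
    IntegrableOn (fun x : ℝ => ((1 + x) ^ a - x ^ a) ^ 2) (Ioi 0) := by
  have hmeas : AEStronglyMeasurable (fun x : ℝ => ((1 + x) ^ a - x ^ a) ^ 2) := by fun_prop
  rw [← Ioc_union_Ioi_eq_Ioi zero_le_one, integrableOn_union]
  constructor
  · -- near `0`, `(u - v)² ≤ 2u² + 2v²` with both squares integrable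
    have hshift : IntegrableOn (fun x : ℝ => (1 + x) ^ (2 * a)) (Ioc 0 1) :=
      (ContinuousOn.integrableOn_Icc (ContinuousOn.rpow_const (f := fun x : ℝ => 1 + x)
        (by fun_prop) fun x hx => Or.inl (by linarith [hx.1]))).mono_set Ioc_subset_Icc_self
    have hsing : IntegrableOn (fun x : ℝ => x ^ (2 * a)) (Ioc 0 1) :=
      (intervalIntegrable_iff_integrableOn_Ioc_of_le zero_le_one).mp
        (intervalIntegral.intervalIntegrable_rpow' (by linarith))
    have hbound : IntegrableOn (fun x : ℝ => 2 * (1 + x) ^ (2 * a) + 2 * x ^ (2 * a)) (Ioc 0 1) :=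
      (hshift.const_mul 2).add (hsing.const_mul 2)
    refine hbound.mono' hmeas.restrict (ae_restrict_of_forall_mem measurableSet_Ioc fun x hx => ?_)
    rw [Real.norm_eq_abs, abs_sq, ← sq_rpow_eq_rpow_two_mul (by linarith [hx.1]),
      ← sq_rpow_eq_rpow_two_mul hx.1.le]
    nlinarith [sq_nonneg ((1 + x) ^ a + x ^ a)]
  · have hbound : IntegrableOn (fun x : ℝ => a ^ 2 * x ^ (2 * a - 2)) (Ioi 1) :=
      (integrableOn_Ioi_rpow_of_lt (by linarith) zero_lt_one).const_mul _
    refine hbound.mono' hmeas.restrict (ae_restrict_of_forall_mem measurableSet_Ioi fun x hx => ?_)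
    have hx : (0 : ℝ) < x := zero_lt_one.trans hx
    calc ‖((1 + x) ^ a - x ^ a) ^ 2‖ = |(1 + x) ^ a - x ^ a| ^ 2 := by simp
      _ ≤ (|a| * x ^ (a - 1)) ^ 2 := by
        gcongr; exact abs_one_add_rpow_sub_rpow_le (by linarith) hx
      _ = a ^ 2 * x ^ (2 * a - 2) := by
        rw [mul_pow, sq_abs, sq_rpow_eq_rpow_two_mul hx.le]; ring_nf

lemma integral_sq_plusPow_sub_plusPow (a : ℝ) {s t : ℝ} (hst : s < t) :
    ∫ x, (plusPow (t - x) a - plusPow (s - x) a) ^ 2 =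
      (t - s) ^ (2 * a + 1) * ∫ x, (plusPow (1 - x) a - plusPow (-x) a) ^ 2 := by
  set δ := t - s
  have hδ : 0 < δ := sub_pos.mpr hst
  have hdilate : ∀ x, (plusPow (t - (s + δ * x)) a - plusPow (s - (s + δ * x)) a) ^ 2 =
      δ ^ (2 * a) * (plusPow (1 - x) a - plusPow (-x) a) ^ 2 := fun x => by
    rw [show t - (s + δ * x) = δ * (1 - x) by ring, show s - (s + δ * x) = δ * -x by ring,
      plusPow_mul hδ, plusPow_mul hδ, ← mul_sub, mul_pow, sq_rpow_eq_rpow_two_mul hδ.le]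
  calc ∫ x, (plusPow (t - x) a - plusPow (s - x) a) ^ 2
      = ∫ x, (plusPow (t - (s + x)) a - plusPow (s - (s + x)) a) ^ 2 :=
        (integral_add_left_eq_self (fun x => (plusPow (t - x) a - plusPow (s - x) a) ^ 2) s).symm
    _ = δ * ∫ x, (plusPow (t - (s + δ * x)) a - plusPow (s - (s + δ * x)) a) ^ 2 := by
        rw [Measure.integral_comp_mul_left
          (fun x => (plusPow (t - (s + x)) a - plusPow (s - (s + x)) a) ^ 2) δ, smul_eq_mul,
          abs_inv, abs_of_pos hδ, mul_inv_cancel_left₀ hδ.ne']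
    _ = δ ^ (2 * a + 1) * ∫ x, (plusPow (1 - x) a - plusPow (-x) a) ^ 2 := by
        rw [funext hdilate, integral_const_mul, ← mul_assoc, Real.rpow_add_one hδ.ne', mul_comm δ]

lemma integrableOn_Ioo_one_sub_rpow {r : ℝ} (hr : -1 < r) :
    IntegrableOn (fun x : ℝ => (1 - x) ^ r) (Ioo 0 1) := by
  rw [← intervalIntegrable_iff_integrableOn_Ioo_of_le zero_le_one]
  simpa using
    ((intervalIntegral.intervalIntegrable_rpow' (a := 0) (b := 1) hr).comp_sub_left 1).symm

lemma integral_Ioo_one_sub_rpow {r : ℝ} (hr : -1 < r) :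
    ∫ x in Ioo 0 1, (1 - x) ^ r = 1 / (r + 1) := by
  rw [← integral_Ioc_eq_integral_Ioo, ← intervalIntegral.integral_of_le zero_le_one,
    intervalIntegral.integral_comp_sub_left (fun x => x ^ r), sub_self, sub_zero,
    integral_rpow (Or.inl hr), Real.one_rpow, Real.zero_rpow (by linarith), sub_zero]

section fracKernel

variable {H : ℝ}

lemma fracKernel_sub_fracKernel (t s x : ℝ) :
    fracKernel H t x - fracKernel H s x =
      plusPow (t - x) (H - 1 / 2) - plusPow (s - x) (H - 1 / 2) := by
  unfold fracKernel; ring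

lemma fracKernel_one_neg {x : ℝ} (hx : 0 < x) :
    fracKernel H 1 (-x) = (1 + x) ^ (H - 1 / 2) - x ^ (H - 1 / 2) := by
  rw [fracKernel, neg_neg, sub_neg_eq_add, plusPow_of_pos (by linarith), plusPow_of_pos hx]

lemma sq_fracKernel_one_of_mem_Ioo {x : ℝ} (hx : x ∈ Ioo 0 1) :
    fracKernel H 1 x ^ 2 = (1 - x) ^ (2 * H - 1) := by
  rw [fracKernel, plusPow_of_pos (by linarith [hx.2]), plusPow_of_nonpos (by linarith [hx.1]),
    sub_zero, sq_rpow_eq_rpow_two_mul (by linarith [hx.2])]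
  ring_nf

lemma sq_fracKernel_one_of_mem_Ioi_sdiff_Ioo {x : ℝ} (hx : x ∈ Ioi 0 \ Ioo 0 1) :
    fracKernel H 1 x ^ 2 = 0 := by
  have hx₁ : 1 ≤ x := not_lt.mp fun h => hx.2 ⟨hx.1, h⟩
  rw [fracKernel, plusPow_of_nonpos (by linarith), plusPow_of_nonpos (by linarith), sub_zero,
    zero_pow two_ne_zero]

lemma setIntegral_Iic_sq_fracKernel_one :
    ∫ x in Iic 0, fracKernel H 1 x ^ 2 =
      ∫ x in Ioi 0, ((1 + x) ^ (H - 1 / 2) - x ^ (H - 1 / 2)) ^ 2 := by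
  rw [← neg_zero, ← integral_comp_neg_Ioi, neg_zero]
  exact setIntegral_congr_fun measurableSet_Ioi fun x (hx : 0 < x) => by
    simp only [fracKernel_one_neg hx]

lemma integrableOn_Iic_sq_fracKernel_one (hH : H ∈ Ioo 0 1) :
    IntegrableOn (fun x => fracKernel H 1 x ^ 2) (Iic 0) := by
  have h : IntegrableOn (fun x => fracKernel H 1 (-x) ^ 2) (Ici (-0)) := by
    rw [neg_zero]
    refine (integrableOn_Ici_iff_integrableOn_Ioi enorm_ne_top).mpr ?_
    refine (integrableOn_Ioi_sq_one_add_rpow_sub_rpow (a := H - 1 / 2)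
      (by linarith [hH.1]) (by linarith [hH.2])).congr_fun (fun x hx => ?_) measurableSet_Ioi
    rw [fracKernel_one_neg hx]
  simpa only [neg_neg] using h.comp_neg_Iic

lemma integrableOn_Ioi_sq_fracKernel_one (hH : 0 < H) :
    IntegrableOn (fun x => fracKernel H 1 x ^ 2) (Ioi 0) :=
  ((integrableOn_Ioo_one_sub_rpow (by linarith)).congr_fun
    (fun x hx => (sq_fracKernel_one_of_mem_Ioo hx).symm) measurableSet_Ioo).of_forall_sdiff_eq_zero
    measurableSet_Ioi fun _ => sq_fracKernel_one_of_mem_Ioi_sdiff_Ioo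

lemma setIntegral_Ioi_sq_fracKernel_one (hH : 0 < H) :
    ∫ x in Ioi 0, fracKernel H 1 x ^ 2 = 1 / (2 * H) := by
  rw [setIntegral_eq_of_subset_of_forall_sdiff_eq_zero measurableSet_Ioi Ioo_subset_Ioi_self
      fun _ => sq_fracKernel_one_of_mem_Ioi_sdiff_Ioo,
    setIntegral_congr_fun measurableSet_Ioo fun x hx => sq_fracKernel_one_of_mem_Ioo hx,
    integral_Ioo_one_sub_rpow (by linarith), sub_add_cancel]

lemma integral_sq_fracKernel_one (hH : H ∈ Ioo 0 1) : ∫ x, fracKernel H 1 x ^ 2 = cH H := by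
  rw [← intervalIntegral.integral_Iic_add_Ioi (integrableOn_Iic_sq_fracKernel_one hH)
    (integrableOn_Ioi_sq_fracKernel_one hH.1), setIntegral_Iic_sq_fracKernel_one,
    setIntegral_Ioi_sq_fracKernel_one hH.1, cH, add_comm]

end fracKernel

theorem fracKernel_increment_norm_general
    (H : ℝ) (hH : H ∈ Set.Ioo (0 : ℝ) 1) (t s : ℝ) (hst : s ≤ t) :
    ∫ x : ℝ, (fracKernel H t x - fracKernel H s x) ^ 2 = cH H * (t - s) ^ (2 * H) := by
  rcases hst.eq_or_lt with rfl | hlt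
  · simp [Real.zero_rpow (by linarith [hH.1] : 2 * H ≠ 0)]
  simp_rw [fracKernel_sub_fracKernel]
  rw [integral_sq_plusPow_sub_plusPow _ hlt, show 2 * (H - 1 / 2) + 1 = 2 * H by ring, mul_comm]
  exact congrArg (· * _) (integral_sq_fracKernel_one hH)

/-- The squared `L²`-norm of the increment kernel `φ_t − φ_s` is `c_𝐇 (t−s)^{2𝐇}`, i.e. it
depends only on `t − s` (stationarity of increments). -/
theorem fracKernel_increment_norm
    (H : ℝ) (hH : H ∈ Set.Ioo (0 : ℝ) 1) (t s : ℝ) (hs : 0 ≤ s) (hst : s ≤ t) :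
    ∫ x : ℝ, (fracKernel H t x - fracKernel H s x) ^ 2 = cH H * (t - s) ^ (2 * H) :=
  fracKernel_increment_norm_general H hH t s hst
end
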